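/- The kernel of the linear map δ : ⊕_{j ∈ Fin n} L_j → L, δ(F_0, …, F_{n−1}) = Σ_j ⁅F_j, x_j⁆, is a finite-dimensional ℚ-vector space of dimension (n−2)!. -/

import Mathlib

noncomputable def scaleLie (n : ℕ) (j : Fin n) (t : ℚ) :
    FreeLieAlgebra ℚ (Fin n) →ₗ⁅ℚ⁆ FreeLieAlgebra ℚ (Fin n) :=
  FreeLieAlgebra.lift ℚ
    (fun i => if i = j then t • FreeLieAlgebra.of ℚ i else FreeLieAlgebra.of ℚ i)

/-- The multilinear part `M` of the free Lie algebra on `Fin n` over `ℚ`: elements `F`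
with `s_{j,t} F = t • F` for all `j ∈ Fin n` and all `t ∈ ℚ`. -/
noncomputable def lieMultilinear (n : ℕ) : Submodule ℚ (FreeLieAlgebra ℚ (Fin n)) where
  carrier := {F | ∀ (j : Fin n) (t : ℚ), scaleLie n j t F = t • F}
  add_mem' := by
    intro a b ha hb j t
    rw [map_add, ha j t, hb j t, smul_add]
  zero_mem' := by
    intro j t
    simp
  smul_mem' := by
    intro c a ha j t
    rw [map_smul, ha j t, smul_comm]

/-- The subspace `L_j`: the multilinear part of the free Lie algebra on the generators
other than `x_j`, i.e. elements `F` with `s_{j,t} F = F` for all `t` and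
`s_{i,t} F = t • F` for all `i ≠ j` and all `t`. -/
noncomputable def lieMultilinearAvoiding (n : ℕ) (j : Fin n) :
    Submodule ℚ (FreeLieAlgebra ℚ (Fin n)) where
  carrier := {F | (∀ t : ℚ, scaleLie n j t F = F) ∧
    ∀ i : Fin n, i ≠ j → ∀ t : ℚ, scaleLie n i t F = t • F}
  add_mem' := by
    rintro a b ⟨ha1, ha2⟩ ⟨hb1, hb2⟩
    exact ⟨fun t => by rw [map_add, ha1 t, hb1 t],
      fun i hij t => by rw [map_add, ha2 i hij t, hb2 i hij t, smul_add]⟩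
  zero_mem' := ⟨fun t => by simp, fun i hij t => by simp⟩
  smul_mem' := by
    rintro c a ⟨ha1, ha2⟩
    exact ⟨fun t => by rw [map_smul, ha1 t],
      fun i hij t => by rw [map_smul, ha2 i hij t, smul_comm]⟩

/-- The linear map `δ : ⊕_{j ∈ Fin n} L_j → L`, `(F_0, …, F_{n−1}) ↦ Σ_j ⁅F_j, x_j⁆`. -/
noncomputable def lieDelta (n : ℕ) :
    ((j : Fin n) → lieMultilinearAvoiding n j) →ₗ[ℚ] FreeLieAlgebra ℚ (Fin n) where
  toFun F := ∑ j : Fin n, ⁅(F j : FreeLieAlgebra ℚ (Fin n)), FreeLieAlgebra.of ℚ j⁆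
  map_add' F G := by
    simp only [Pi.add_apply, Submodule.coe_add, add_lie]
    rw [Finset.sum_add_distrib]
  map_smul' c F := by
    simp only [Pi.smul_apply, SetLike.val_smul, smul_lie, RingHom.id_apply]
    rw [Finset.smul_sum]

/-!
The scalings `s_{i,t}` act diagonally on left-normed words `[x_{w₁}, x_{w₂}, …, x_{w_k}]`, with
eigenvalue `t ^ (number of occurrences of i in w)`. Since the words span the free Lie algebra and
eigenspaces of distinct eigenvalues are independent, `L_j` is the span of the words using each
letter other than `j` exactly once, and `δ` maps onto the span of the words using every letter
once. Repeated use of the Jacobi identity moves any chosen letter `b` to the front of a word, and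
the words `[x_b, x_{σ₁}, …, x_{σ_k}]` with `b ∉ σ` are linearly independent: in the free associative
algebra the coefficient of the monomial `x_b x_{τ₁} ⋯ x_{τ_k}` in such a word is `1` if `τ = σ` and
`0` otherwise. So `dim L_j = (n-2)!` and `dim (range δ) = (n-1)!`, and rank–nullity leaves
`n (n-2)! - (n-1)! = (n-2)!` for the kernel.
-/

open scoped Nat

lemma Multiset.coe_append_singleton {X : Type*} (l : List X) (z : X) :
    ((l ++ [z] : List X) : Multiset X) = z ::ₘ l := by
  rw [Multiset.cons_coe]
  exact Multiset.coe_eq_coe.2 (List.perm_append_singleton z l)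

lemma Multiset.card_lists {X : Type*} (s : Multiset X) : card s.lists = (card s)! :=
  Quotient.inductionOn s fun l => by simp [List.length_permutations]

section

open Submodule

theorem Module.End.mem_span_image_of_eigenvalue_eq {K V ι : Type*} [Field K] [AddCommGroup V]
    [Module K V] {f : Module.End K V} {v : ι → V} {μ : ι → K} (hv : ∀ i, f (v i) = μ i • v i)
    {s : Set ι} {c : K} {x : V} (hx : x ∈ span K (v '' s)) (hfx : f x = c • x) :
    x ∈ span K (v '' {i ∈ s | μ i = c}) := by
  have hs : v '' s ⊆ v '' {i ∈ s | μ i = c} ∪ v '' {i ∈ s | μ i ≠ c} := by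
    rintro _ ⟨i, hi, rfl⟩
    by_cases h : μ i = c
    exacts [Or.inl ⟨i, ⟨hi, h⟩, rfl⟩, Or.inr ⟨i, ⟨hi, h⟩, rfl⟩]
  have hx' := span_mono hs hx
  rw [span_union, mem_sup] at hx'
  obtain ⟨y, hy, z, hz, rfl⟩ := hx'
  have hy' : y ∈ f.eigenspace c :=
    span_le.2 (by rintro _ ⟨i, ⟨-, rfl⟩, rfl⟩; exact mem_eigenspace_iff.2 (hv i)) hy
  have hz' : z ∈ ⨆ d ∈ ({c}ᶜ : Set K), f.eigenspace d :=
    span_le.2 (by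
      rintro _ ⟨i, ⟨-, hi⟩, rfl⟩
      exact mem_iSup_of_mem (μ i) (mem_iSup_of_mem hi (mem_eigenspace_iff.2 (hv i)))) hz
  have hzc : z ∈ f.eigenspace c := by
    rw [mem_eigenspace_iff, ← add_sub_cancel_left y z, map_sub, hfx, mem_eigenspace_iff.1 hy',
      smul_sub]
  obtain rfl : z = 0 :=
    disjoint_def.1 (f.eigenspaces_iSupIndep.disjoint_biSup (by simp)) z hzc hz'
  simpa using hy

end

namespace MonoidAlgebra

open FreeMonoid

variable {R X : Type*} [Semiring R]

lemma coeff_single_of_mul_ofList_cons_of_ne {a z : X} (h : z ≠ a) (r : R)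
    (P : MonoidAlgebra R (FreeMonoid X)) (u : List X) :
    (single (FreeMonoid.of z) r * P).coeff (ofList (a :: u)) = 0 :=
  coeff_single_mul_of_forall_mul_ne _ _ fun d hd =>
    h (List.cons.inj (congrArg toList hd : z :: toList d = a :: u)).1

lemma coeff_mul_single_of_mul_of [DecidableEq X] (P : MonoidAlgebra R (FreeMonoid X)) (r : R)
    (w : FreeMonoid X) (y z : X) :
    (P * single (FreeMonoid.of z) r).coeff (w * FreeMonoid.of y) =
      if y = z then P.coeff w * r else 0 := by
  split_ifs with h
  · rw [h, coeff_mul_single_mul]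
  · refine coeff_mul_single_of_forall_mul_ne _ _ fun d hd => h ?_
    simpa using (congrArg (fun v => v.toList.getLast?) hd).symm

end MonoidAlgebra

namespace FreeLieAlgebra

open Module Submodule Set

variable (R : Type*) {X : Type*} [CommRing R]

noncomputable def leftNormed : List X → FreeLieAlgebra R X
  | [] => 0
  | a :: l => l.foldl (fun F z => ⁅F, of R z⁆) (of R a)

noncomputable def leftNormedSpan (b : X) (s : Multiset X) : Submodule R (FreeLieAlgebra R X) :=
  span R ((fun σ => leftNormed R (b :: σ)) '' {σ | (σ : Multiset X) = s})

noncomputable def wordSpan (m : Multiset X) : Submodule R (FreeLieAlgebra R X) :=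
  span R (leftNormed R '' {w | (w : Multiset X) = m})

variable {R}

@[simp] lemma leftNormed_nil : leftNormed R ([] : List X) = 0 := rfl

@[simp] lemma leftNormed_singleton (a : X) : leftNormed R [a] = of R a := rfl

lemma leftNormed_concat (a : X) (l : List X) (z : X) :
    leftNormed R (a :: l ++ [z]) = ⁅leftNormed R (a :: l), of R z⁆ := by
  simp [leftNormed, List.foldl_append]

lemma leftNormed_mem_leftNormedSpan (b : X) (σ : List X) :
    leftNormed R (b :: σ) ∈ leftNormedSpan R b σ :=
  subset_span ⟨σ, rfl, rfl⟩

lemma lie_of_mem_leftNormedSpan {b : X} {s : Multiset X} {u : FreeLieAlgebra R X}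
    (hu : u ∈ leftNormedSpan R b s) (z : X) : ⁅u, of R z⁆ ∈ leftNormedSpan R b (z ::ₘ s) := by
  induction hu using span_induction with
  | mem x hx =>
    obtain ⟨σ, rfl, rfl⟩ := hx
    rw [← leftNormed_concat]
    exact subset_span ⟨σ ++ [z], Multiset.coe_append_singleton σ z, rfl⟩
  | zero => simp
  | add x y _ _ hx hy => rw [add_lie]; exact add_mem hx hy
  | smul c x _ hx => rw [smul_lie]; exact smul_mem _ c hx

lemma lie_leftNormed_mem_leftNormedSpan {b : X} {s : Multiset X} {u : FreeLieAlgebra R X}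
    (hu : u ∈ leftNormedSpan R b s) (c : X) (m : List X) :
    ⁅u, leftNormed R (c :: m)⁆ ∈ leftNormedSpan R b (s + (c :: m : List X)) := by
  induction m using List.reverseRecOn generalizing s u with
  | nil =>
    simpa only [leftNormed_singleton, ← Multiset.cons_coe, Multiset.add_cons, Multiset.coe_nil,
      add_zero] using lie_of_mem_leftNormedSpan hu c
  | append_singleton m z ih =>
    rw [← List.cons_append, leftNormed_concat, leibniz_lie,
      ← lie_skew (leftNormed R (c :: m)), Multiset.coe_append_singleton, Multiset.add_cons]
    refine add_mem (lie_of_mem_leftNormedSpan (ih hu) z) (neg_mem ?_)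
    simpa only [Multiset.cons_add] using ih (lie_of_mem_leftNormedSpan hu z)

lemma leftNormed_mem_leftNormedSpan_erase [DecidableEq X] {b : X} {w : List X} (hb : b ∈ w) :
    leftNormed R w ∈ leftNormedSpan R b ((w : Multiset X).erase b) := by
  induction w using List.reverseRecOn with
  | nil => simp at hb
  | append_singleton w z ih =>
    rcases w with _ | ⟨a, l⟩
    · obtain rfl : b = z := by simpa using hb
      simpa using leftNormed_mem_leftNormedSpan (R := R) b []
    rw [leftNormed_concat, Multiset.coe_append_singleton]
    by_cases hbw : b ∈ a :: l
    · rw [Multiset.erase_cons_tail_of_mem (Multiset.mem_coe.2 hbw)]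
      exact lie_of_mem_leftNormedSpan (ih hbw) z
    · obtain rfl : b = z := List.mem_singleton.1 ((List.mem_append.1 hb).resolve_left hbw)
      rw [Multiset.erase_cons_head, ← lie_skew]
      simpa using
        neg_mem (lie_leftNormed_mem_leftNormedSpan (leftNormed_mem_leftNormedSpan b []) a l)

lemma wordSpan_eq_leftNormedSpan [DecidableEq X] {b : X} {m : Multiset X} (hb : b ∈ m) :
    wordSpan R m = leftNormedSpan R b (m.erase b) := by
  apply le_antisymm
  · rw [wordSpan, span_le]
    rintro _ ⟨w, rfl, rfl⟩
    exact leftNormed_mem_leftNormedSpan_erase (Multiset.mem_coe.1 hb)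
  · rw [leftNormedSpan, span_le]
    rintro _ ⟨σ, hσ, rfl⟩
    exact subset_span ⟨b :: σ, by
      rw [mem_ofPred_eq, ← Multiset.cons_coe, show (σ : Multiset X) = _ from hσ,
        Multiset.cons_erase hb], rfl⟩

lemma lie_of_mem_wordSpan {m : Multiset X} {u : FreeLieAlgebra R X} (hu : u ∈ wordSpan R m)
    (z : X) : ⁅u, of R z⁆ ∈ wordSpan R (z ::ₘ m) := by
  induction hu using span_induction with
  | mem x hx =>
    obtain ⟨_ | ⟨a, l⟩, rfl, rfl⟩ := hx
    · simp
    rw [← leftNormed_concat]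
    exact subset_span ⟨_, Multiset.coe_append_singleton _ z, rfl⟩
  | zero => simp
  | add x y _ _ hx hy => rw [add_lie]; exact add_mem hx hy
  | smul c x _ hx => rw [smul_lie]; exact smul_mem _ c hx

lemma lieSubalgebra_eq_top_of_forall_of_mem {K : LieSubalgebra R (FreeLieAlgebra R X)}
    (h : ∀ x, of R x ∈ K) : K = ⊤ := by
  let g : FreeLieAlgebra R X →ₗ⁅R⁆ K := lift R fun x => ⟨of R x, h x⟩
  have hg : K.incl.comp g = LieHom.id := hom_ext fun x => by simp [g]
  refine eq_top_iff.2 fun F _ => ?_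
  rw [← show K.incl (g F) = F from LieHom.congr_fun hg F]
  exact (g F).2

theorem span_range_leftNormed : span R (range (leftNormed R : List X → _)) = ⊤ := by
  set W := span R (range (leftNormed R : List X → _))
  have leftNormedSpan_le (b : X) (s : Multiset X) : leftNormedSpan R b s ≤ W :=
    span_mono (by rintro _ ⟨σ, -, rfl⟩; exact ⟨_, rfl⟩)
  have lie_mem {x y : FreeLieAlgebra R X} (hx : x ∈ W) (hy : y ∈ W) : ⁅x, y⁆ ∈ W := by
    induction hy using span_induction with
    | mem y hy =>
      obtain ⟨_ | ⟨c, m⟩, rfl⟩ := hy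
      · simp
      induction hx using span_induction with
      | mem x hx =>
        obtain ⟨_ | ⟨a, l⟩, rfl⟩ := hx
        · simp
        exact leftNormedSpan_le _ _
          (lie_leftNormed_mem_leftNormedSpan (leftNormed_mem_leftNormedSpan a l) c m)
      | zero => simp
      | add x x' _ _ hx hx' => rw [add_lie]; exact add_mem hx hx'
      | smul r x _ hx => rw [smul_lie]; exact smul_mem _ r hx
    | zero => simp
    | add y y' _ _ hy hy' => rw [lie_add]; exact add_mem hy hy'
    | smul r y _ hy => rw [lie_smul]; exact smul_mem _ r hy
  let K : LieSubalgebra R (FreeLieAlgebra R X) := { W with lie_mem' := lie_mem }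
  have hK : K = ⊤ := lieSubalgebra_eq_top_of_forall_of_mem fun x => subset_span ⟨[x], rfl⟩
  exact congrArg LieSubalgebra.toSubmodule hK

open MonoidAlgebra FreeMonoid

variable (R)

attribute [local instance] LieRing.ofAssociativeRing

noncomputable def toFreeMonoidAlgebra : FreeLieAlgebra R X →ₗ⁅R⁆ MonoidAlgebra R (FreeMonoid X) :=
  lift R fun x => single (FreeMonoid.of x) 1

variable {R}

lemma coeff_toFreeMonoidAlgebra_leftNormed [DecidableEq X] {a : X} {l : List X} (ha : a ∉ l)
    (u : List X) :
    (toFreeMonoidAlgebra R (leftNormed R (a :: l))).coeff (ofList (a :: u)) =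
      if u = l then 1 else 0 := by
  induction l using List.reverseRecOn generalizing u with
  | nil =>
    rw [leftNormed_singleton, toFreeMonoidAlgebra, lift_of_apply, coeff_single]
    rcases u with _ | ⟨y, u⟩
    · simp
    · rw [Finsupp.single_eq_of_ne fun h => by simpa using congrArg toList h]
      simp
  | append_singleton l z ih =>
    simp only [List.mem_append, List.mem_singleton, not_or] at ha
    rw [← List.cons_append, leftNormed_concat, LieHom.map_lie, Ring.lie_def, coeff_sub,
      Finsupp.sub_apply, toFreeMonoidAlgebra, lift_of_apply, ← toFreeMonoidAlgebra,
      coeff_single_of_mul_ofList_cons_of_ne (Ne.symm ha.2), sub_zero]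
    rcases u.eq_nil_or_concat' with rfl | ⟨u, y, rfl⟩
    · rw [show ofList [a] = 1 * FreeMonoid.of a by simp, coeff_mul_single_of_mul_of, if_neg ha.2]
      simp
    · rw [← List.cons_append, ofList_append, ofList_singleton, coeff_mul_single_of_mul_of, ih ha.1,
        mul_one]
      by_cases hy : y = z <;> simp [hy]

theorem linearIndependent_leftNormed_cons [Nontrivial R] [DecidableEq X] {b : X}
    {s : Multiset X} (hb : b ∉ s) :
    LinearIndependent R (fun σ : s.lists.toFinset => leftNormed R (b :: σ)) := by
  rw [Fintype.linearIndependent_iff]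
  intro g hg τ
  let ev : FreeLieAlgebra R X →ₗ[R] R := (Finsupp.lapply (ofList (b :: τ))).comp
    ((coeffLinearEquiv R).toLinearMap.comp (toFreeMonoidAlgebra R).toLinearMap)
  have hev (σ : s.lists.toFinset) :
      ev (leftNormed R (b :: σ)) = if (τ : List X) = σ then 1 else 0 := by
    have hσ : s = σ := by simpa using Multiset.mem_toFinset.1 σ.2
    exact coeff_toFreeMonoidAlgebra_leftNormed (R := R) (hσ ▸ hb) τ
  simpa [hev] using congrArg ev hg

theorem finrank_leftNormedSpan [Nontrivial R] [DecidableEq X] {b : X} {S : Finset X}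
    (hb : b ∉ S) : finrank R (leftNormedSpan R b S.val) = S.card ! := by
  have : leftNormedSpan R b S.val =
      span R (range fun σ : S.val.lists.toFinset => leftNormed R (b :: σ)) := by
    rw [leftNormedSpan]
    congr 1
    ext F
    simp [eq_comm]
  rw [this, finrank_span_eq_card (linearIndependent_leftNormed_cons hb), Fintype.card_coe,
    Multiset.toFinset_card_of_nodup (Multiset.lists_nodup_finset S), Multiset.card_lists]
  rfl

theorem finrank_wordSpan [Nontrivial R] [DecidableEq X] {S : Finset X} (hS : S.Nonempty) :
    finrank R (wordSpan R S.val) = (S.card - 1)! := by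
  obtain ⟨b, hb⟩ := hS
  rw [wordSpan_eq_leftNormedSpan hb, ← Finset.erase_val, finrank_leftNormedSpan (S.notMem_erase b),
    Finset.card_erase_of_mem hb]

end FreeLieAlgebra

section

open FreeLieAlgebra Module Submodule Set

variable {n : ℕ}

lemma scaleLie_of (j i : Fin n) (t : ℚ) : scaleLie n j t (of ℚ i) = t ^ [i].count j • of ℚ i := by
  by_cases h : i = j <;> simp [scaleLie, h]

lemma scaleLie_leftNormed (j : Fin n) (t : ℚ) (w : List (Fin n)) :
    scaleLie n j t (leftNormed ℚ w) = t ^ w.count j • leftNormed ℚ w := by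
  induction w using List.reverseRecOn with
  | nil => simp
  | append_singleton w z ih =>
    rcases w with _ | ⟨a, l⟩
    · exact scaleLie_of j z t
    rw [leftNormed_concat, LieHom.map_lie, ih, scaleLie_of, smul_lie, lie_smul, smul_smul,
      List.count_append, pow_add]

lemma wordSpan_le_eigenspace_scaleLie (m : Multiset (Fin n)) (j : Fin n) (t : ℚ) :
    wordSpan ℚ m ≤ End.eigenspace (scaleLie n j t).toLinearMap (t ^ m.count j) :=
  span_le.2 <| by
    rintro _ ⟨w, rfl, rfl⟩
    simpa using scaleLie_leftNormed j t w

lemma mem_wordSpan_of_scaleLie_two {m : Multiset (Fin n)} {F : FreeLieAlgebra ℚ (Fin n)}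
    (hF : ∀ i, scaleLie n i 2 F = (2 : ℚ) ^ m.count i • F) : F ∈ wordSpan ℚ m := by
  have key (T : Finset (Fin n)) :
      F ∈ span ℚ (leftNormed ℚ '' {w | ∀ i ∈ T, w.count i = m.count i}) := by
    induction T using Finset.induction_on with
    | empty => simp [span_range_leftNormed]
    | insert a T _ ih =>
      refine span_mono (image_mono ?_)
        (Module.End.mem_span_image_of_eigenvalue_eq (scaleLie_leftNormed a 2) ih (hF a))
      rintro w ⟨hw, hwa⟩ i hi
      rcases Finset.mem_insert.1 hi with rfl | hi
      · exact pow_right_injective₀ two_pos (by norm_num) hwa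
      · exact hw i hi
  simpa [wordSpan, Multiset.ext] using key Finset.univ

theorem lieMultilinearAvoiding_eq_wordSpan (j : Fin n) :
    lieMultilinearAvoiding n j = wordSpan ℚ (Finset.univ.erase j).val := by
  ext F
  constructor
  · rintro ⟨hj, hi⟩
    refine mem_wordSpan_of_scaleLie_two fun i => ?_
    by_cases h : i = j
    · subst h; simp [hj]
    · simp [h, hi i h]
  · intro hF
    have h i t := Module.End.mem_eigenspace_iff.1 (wordSpan_le_eigenspace_scaleLie _ i t hF)
    exact ⟨fun t => by simpa using h j t, fun i hi t => by simpa [hi] using h i t⟩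

lemma lieDelta_apply (F : (j : Fin n) → lieMultilinearAvoiding n j) :
    lieDelta n F = ∑ j, ⁅(F j : FreeLieAlgebra ℚ (Fin n)), of ℚ j⁆ :=
  rfl

lemma lieDelta_single (j : Fin n) (F : lieMultilinearAvoiding n j) :
    lieDelta n (Pi.single j F) = ⁅(F : FreeLieAlgebra ℚ (Fin n)), of ℚ j⁆ := by
  rw [lieDelta_apply, Finset.sum_eq_single j (fun i _ hi => by rw [Pi.single_eq_of_ne hi]; simp)
    (by simp), Pi.single_eq_same]

theorem range_lieDelta (hn : 2 ≤ n) :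
    LinearMap.range (lieDelta n) = wordSpan ℚ (Finset.univ : Finset (Fin n)).val := by
  apply le_antisymm
  · rintro _ ⟨F, rfl⟩
    rw [lieDelta_apply]
    refine Submodule.sum_mem _ fun j _ => ?_
    have hF : (F j : FreeLieAlgebra ℚ (Fin n)) ∈ wordSpan ℚ (Finset.univ.erase j).val :=
      lieMultilinearAvoiding_eq_wordSpan j ▸ (F j).2
    have := lie_of_mem_wordSpan hF j
    rwa [Finset.erase_val, Multiset.cons_erase (Finset.mem_univ j)] at this
  · rw [wordSpan, span_le]
    rintro _ ⟨w, hw, rfl⟩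
    have hlen : w.length = n := by simpa using congrArg Multiset.card hw
    obtain ⟨a, l, z, rfl⟩ : ∃ a l z, w = a :: l ++ [z] := by
      rcases w.eq_nil_or_concat' with rfl | ⟨_ | ⟨a, l⟩, z, rfl⟩
      · simp at hlen; omega
      · simp at hlen; omega
      · exact ⟨a, l, z, rfl⟩
    have hz : leftNormed ℚ (a :: l) ∈ lieMultilinearAvoiding n z := by
      rw [lieMultilinearAvoiding_eq_wordSpan]
      refine subset_span ⟨a :: l, ?_, rfl⟩
      rw [mem_ofPred_eq, Finset.erase_val, ← Multiset.erase_cons_head z (a :: l),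
        ← Multiset.coe_append_singleton]
      exact congrArg (Multiset.erase · z) hw
    exact ⟨Pi.single z ⟨_, hz⟩, by rw [lieDelta_single, leftNormed_concat]⟩

theorem finrank_lieMultilinearAvoiding (hn : 2 ≤ n) (j : Fin n) :
    finrank ℚ (lieMultilinearAvoiding n j) = (n - 2)! := by
  have hj : (Finset.univ.erase j).Nonempty :=
    (Finset.univ_nontrivial_iff.2 (Fin.nontrivial_iff_two_le.2 hn)).erase_nonempty
  rw [lieMultilinearAvoiding_eq_wordSpan, finrank_wordSpan hj,
    Finset.card_erase_of_mem (Finset.mem_univ j), Finset.card_univ, Fintype.card_fin]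
  rfl

theorem finrank_range_lieDelta (hn : 2 ≤ n) :
    finrank ℚ (LinearMap.range (lieDelta n)) = (n - 1)! := by
  rw [range_lieDelta hn, finrank_wordSpan ⟨⟨0, by omega⟩, Finset.mem_univ _⟩, Finset.card_univ,
    Fintype.card_fin]

end

/-- For `n ≥ 2`, the kernel of the linear map
`δ : ⊕_{j ∈ Fin n} L_j → L`, `δ(F_0, …, F_{n−1}) = Σ_j ⁅F_j, x_j⁆`, is a
finite-dimensional `ℚ`-vector space of dimension `(n − 2)!`. -/
theorem lieDelta_ker_finrank (n : ℕ) (hn : 2 ≤ n) :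
    FiniteDimensional ℚ (LinearMap.ker (lieDelta n)) ∧
    Module.finrank ℚ (LinearMap.ker (lieDelta n)) = Nat.factorial (n - 2) := by
  have (j : Fin n) : FiniteDimensional ℚ (lieMultilinearAvoiding n j) :=
    Module.finite_of_finrank_pos (by rw [finrank_lieMultilinearAvoiding hn]; positivity)
  refine ⟨inferInstance, ?_⟩
  have hrank := (lieDelta n).finrank_range_add_finrank_ker
  rw [finrank_range_lieDelta hn, Module.finrank_pi_fintype,
    Finset.sum_congr rfl fun j _ => finrank_lieMultilinearAvoiding hn j] at hrank
  obtain ⟨m, rfl⟩ : ∃ m, n = m + 2 := ⟨n - 2, by omega⟩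
  simp [Nat.factorial_succ] at hrank ⊢
  linarith
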